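/- Under the adaptive-stencil mesh setup, assume u_{i+1} ≠ u_i, and let u_min and u_max be real numbers with u_min ≤ min(u_i, u_{i+1}) and u_max ≥ max(u_i, u_{i+1}). Define mℓ and mr by: if u_i < u_{i+1}, mℓ = min(0, (u_min − u_i)/(u_{i+1} − u_i)) and mr = max(1, (u_max − u_i)/(u_{i+1} − u_i)); if u_{i+1} < u_i, mℓ = min(0, (u_max − u_i)/(u_{i+1} − u_i)) and mr = max(1, (u_min − u_i)/(u_{i+1} − u_i)). Define the bound sequences by B_1^− = (−4(mr−1) − 1)·d_1 and B_1^+ = (−4·mℓ + 1)·d_1, and for 2 ≤ j ≤ n−1: if t_j ≤ 0 then B_j^− = (B_{j−1}^− − λ̄_{j−1})·d_j/(1−t_j) and B_j^+ = (B_{j−1}^+ − λ̄_{j−1})·d_j/(1−t_j); if t_j ≥ 1 then B_j^− = (B_{j−1}^+ − λ̄_{j−1})·d_j/(−t_j) and B_j^+ = (B_{j−1}^− − λ̄_{j−1})·d_j/(−t_j). If B_j^− ≤ λ̄_j ≤ B_j^+ for every 1 ≤ j ≤ n−1, then for every x ∈ [x_i, x_{i+1}], u_min ≤ U_n(x) ≤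 u_max. -/

import Mathlib

/-- Divided differences over consecutive nodes: `divdiff x u k m = U[x_k, …, x_{k+m}]`. -/
noncomputable def divdiff (x u : ℕ → ℝ) : ℕ → ℕ → ℝ
  | k, 0 => u k
  | k, m + 1 => (divdiff x u (k + 1) m - divdiff x u k m) / (x (k + m + 1) - x k)

/-- `stMin e j = min{e_0, …, e_j}`. -/
def stMin (e : ℕ → ℕ) (j : ℕ) : ℕ := (Finset.range (j + 1)).inf' Finset.nonempty_range_add_one e

/-- `stMax e j = max{e_0, …, e_j}`. -/
def stMax (e : ℕ → ℕ) (j : ℕ) : ℕ := (Finset.range (j + 1)).sup' Finset.nonempty_range_add_one e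

/-- `U[V_j]`: the divided difference over the consecutive nodes of the stencil
`V_j = {e_0, …, e_{j+1}}`, from its leftmost node `x_j^l` to its rightmost node `x_j^r`. -/
noncomputable def UV (x u : ℕ → ℝ) (e : ℕ → ℕ) (j : ℕ) : ℝ :=
  divdiff x u (stMin e (j + 1)) (stMax e (j + 1) - stMin e (j + 1))

/-- The Newton interpolant of degree `n` on the adaptive stencil:
`U_n(y) = u_i + Σ_{j=0}^{n−1} U[V_j] · Π_{k=0}^{j} (y − x_{e_k})`. -/
noncomputable def Un (x u : ℕ → ℝ) (e : ℕ → ℕ) (i n : ℕ) (y : ℝ) : ℝ :=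
  u i + ∑ j ∈ Finset.range n, UV x u e j * ∏ k ∈ Finset.range (j + 1), (y - x (e k))

/-- Normalized stencil width `d_j = (x_j^r − x_j^l)/(x_{i+1} − x_i)`. -/
noncomputable def dN (x : ℕ → ℝ) (e : ℕ → ℕ) (i j : ℕ) : ℝ :=
  (x (stMax e (j + 1)) - x (stMin e (j + 1))) / (x (i + 1) - x i)

/-- Normalized position `t_j = (x_{e_j} − x_i)/(x_{i+1} − x_i)` of the added stencil point. -/
noncomputable def tN (x : ℕ → ℝ) (e : ℕ → ℕ) (i j : ℕ) : ℝ :=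
  (x (e j) - x i) / (x (i + 1) - x i)

/-- Scaled divided-difference ratio
`λ̄_j = (U[V_j]/U[x_i, x_{i+1}]) · Π_{k=1}^{j} (x_k^r − x_k^l)`. -/
noncomputable def lamBar (x u : ℕ → ℝ) (e : ℕ → ℕ) (i j : ℕ) : ℝ :=
  (UV x u e j / divdiff x u i 1) *
    ∏ k ∈ Finset.Icc 1 j, (x (stMax e (k + 1)) - x (stMin e (k + 1)))

/-- The expanded normalized Newton form
`S_n(s) = s + Σ_{j=1}^{n−1} (λ̄_j / (d_1⋯d_j)) · s·(s−1) · Π_{k=2}^{j} (s − t_k)`. -/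
noncomputable def Sn (n : ℕ) (d t lam : ℕ → ℝ) (s : ℝ) : ℝ :=
  s + ∑ j ∈ Finset.Icc 1 (n - 1),
    (lam j / ∏ k ∈ Finset.Icc 1 j, d k) * (s * (s - 1)) * ∏ k ∈ Finset.Icc 2 j, (s - t k)


/-!
Put `h = x_{i+1} − x_i` and `s = (x − x_i)/h ∈ [0, 1]`. Then
`U_n(x) = u_i + (u_{i+1} − u_i)(s + s(s − 1) T_1(s))`, where the Horner tails
`T_j(s) = Σ_{m ≥ j} (λ̄_m / (d_1⋯d_m)) Π_{k=j+1}^{m} (s − t_k)` satisfy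
`T_j = λ̄_j / (d_1⋯d_j) + (s − t_{j+1}) T_{j+1}`. Divided by `d_1⋯d_j`, the recursion for `B_j^±`
is the same Horner step with `s − t_{j+1}` replaced by its extreme value `1 − t_{j+1}` (if
`t_{j+1} ≤ 0`) or `−t_{j+1}` (if `t_{j+1} ≥ 1`), and `B_j^− ≤ λ̄_j ≤ B_j^+` forces the bounds at
`j + 1` to straddle `0`; so a backward induction gives `B_j^− ≤ (d_1⋯d_j) T_j(s) ≤ B_j^+`.
At `j = 1` this puts `T_1(s)` in `[−4(mr − 1) − 1, −4mℓ + 1]`, hence the quadratic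
`s + s(s − 1) T_1(s)` in `[mℓ, mr]`, which the affine map back to data values sends into
`[u_min, u_max]`.
-/

open Finset

section NewtonTail

variable (c t : ℕ → ℝ) (L : ℕ) (s : ℝ)

noncomputable def newtonTail (j : ℕ) : ℝ :=
  ∑ m ∈ Icc j L, c m * ∏ k ∈ Icc (j + 1) m, (s - t k)

theorem newtonTail_self : newtonTail c t L s L = c L := by
  simp [newtonTail]

theorem newtonTail_of_lt {j : ℕ} (hj : j < L) :
    newtonTail c t L s j = c j + (s - t (j + 1)) * newtonTail c t L s (j + 1) := by
  rw [newtonTail, ← insert_Icc_add_one_left_eq_Icc hj.le, sum_insert (by simp),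
    Icc_eq_empty (by omega), prod_empty, mul_one, newtonTail, mul_sum]
  congr 1
  refine sum_congr rfl fun m hm => ?_
  rw [← insert_Icc_add_one_left_eq_Icc (mem_Icc.1 hm).1, prod_insert (by simp)]
  ring

end NewtonTail

theorem mul_mem_Icc_of_mem_Icc {a A T lo hi : ℝ} (ha : a ∈ Set.Icc 0 A) (hT : T ∈ Set.Icc lo hi)
    (hlo : lo ≤ 0) (hhi : 0 ≤ hi) : a * T ∈ Set.Icc (A * lo) (A * hi) := by
  obtain ⟨ha0, haA⟩ := ha
  obtain ⟨hloT, hThi⟩ := hT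
  constructor
  · calc A * lo ≤ a * lo := mul_le_mul_of_nonpos_right haA hlo
      _ ≤ a * T := mul_le_mul_of_nonneg_left hloT ha0
  · calc a * T ≤ a * hi := mul_le_mul_of_nonneg_left hThi ha0
      _ ≤ A * hi := mul_le_mul_of_nonneg_right haA hhi

def IsTailBoundStep (c t bm bp : ℕ → ℝ) (k : ℕ) : Prop :=
  (t (k + 1) ≤ 0 ∧ bm k = c k + (1 - t (k + 1)) * bm (k + 1) ∧
      bp k = c k + (1 - t (k + 1)) * bp (k + 1)) ∨
    (1 ≤ t (k + 1) ∧ bm k = c k + -t (k + 1) * bp (k + 1) ∧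
      bp k = c k + -t (k + 1) * bm (k + 1))

theorem newtonTail_mem_Icc {c t bm bp : ℕ → ℝ} {L j : ℕ} {s : ℝ} (hs : s ∈ Set.Icc 0 1)
    (hc : ∀ k, j ≤ k → k ≤ L → c k ∈ Set.Icc (bm k) (bp k))
    (hstep : ∀ k, j ≤ k → k < L → IsTailBoundStep c t bm bp k) (hj : j ≤ L) :
    newtonTail c t L s j ∈ Set.Icc (bm j) (bp j) := by
  refine Nat.decreasingInduction' (P := fun k => newtonTail c t L s k ∈ Set.Icc (bm k) (bp k))
    (fun k hkL hjk ih => ?_) hj (by simpa [newtonTail_self] using hc L hj le_rfl)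
  obtain ⟨hcm, hcp⟩ := hc k hjk hkL.le
  rw [newtonTail_of_lt c t L s hkL]
  rcases hstep k hjk hkL with ⟨ht, hm, hp⟩ | ⟨ht, hm, hp⟩
  · have hbm : bm (k + 1) ≤ 0 := by nlinarith
    have hbp : 0 ≤ bp (k + 1) := by nlinarith
    have := mul_mem_Icc_of_mem_Icc (a := s - t (k + 1)) (A := 1 - t (k + 1))
      ⟨by linarith [hs.1], by linarith [hs.2]⟩ ih hbm hbp
    rw [hm, hp]
    exact ⟨by linarith [this.1], by linarith [this.2]⟩
  · have hbm : bm (k + 1) ≤ 0 := by nlinarith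
    have hbp : 0 ≤ bp (k + 1) := by nlinarith
    have := mul_mem_Icc_of_mem_Icc (a := t (k + 1) - s) (A := t (k + 1)) (T := -_)
      ⟨by linarith [hs.2], by linarith [hs.1]⟩ ⟨neg_le_neg ih.2, neg_le_neg ih.1⟩ (neg_nonpos.2 hbp)
      (neg_nonneg.2 hbm)
    rw [hm, hp]
    exact ⟨by linarith [this.1], by linarith [this.2]⟩

theorem div_eq_div_add_mul_div {B B' lam P d a : ℝ} (hP : P ≠ 0) (hd : d ≠ 0) (ha : a ≠ 0)
    (hB' : B' = (B - lam) * d / a) : B / P = lam / P + a * (B' / (P * d)) := by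
  subst hB'
  field_simp
  ring

theorem newtonTail_mem_Icc_of_ppi {d t lam Bm Bp : ℕ → ℝ} {L : ℕ} {s : ℝ}
    (hs : s ∈ Set.Icc 0 1) (hL : 1 ≤ L)
    (hd : ∀ k, 1 ≤ k → k ≤ L → 0 < d k)
    (ht : ∀ j, 2 ≤ j → j ≤ L → t j ≤ 0 ∨ 1 ≤ t j)
    (hBrec : ∀ j, 2 ≤ j → j ≤ L →
      (t j ≤ 0 →
        Bm j = (Bm (j - 1) - lam (j - 1)) * d j / (1 - t j) ∧
        Bp j = (Bp (j - 1) - lam (j - 1)) * d j / (1 - t j)) ∧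
      (1 ≤ t j →
        Bm j = (Bp (j - 1) - lam (j - 1)) * d j / (-t j) ∧
        Bp j = (Bm (j - 1) - lam (j - 1)) * d j / (-t j)))
    (hlam : ∀ j, 1 ≤ j → j ≤ L → Bm j ≤ lam j ∧ lam j ≤ Bp j) :
    newtonTail (fun m => lam m / ∏ k ∈ Icc 1 m, d k) t L s 1 ∈
      Set.Icc (Bm 1 / d 1) (Bp 1 / d 1) := by
  have hP : ∀ m ≤ L, 0 < ∏ k ∈ Icc 1 m, d k := fun m hm =>
    prod_pos fun k hk => hd k (mem_Icc.1 hk).1 ((mem_Icc.1 hk).2.trans hm)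
  have hnormal := newtonTail_mem_Icc (c := fun m => lam m / ∏ k ∈ Icc 1 m, d k) (t := t)
    (bm := fun m => Bm m / ∏ k ∈ Icc 1 m, d k) (bp := fun m => Bp m / ∏ k ∈ Icc 1 m, d k) hs
    (fun k hk hkL => ⟨div_le_div_of_nonneg_right (hlam k hk hkL).1 (hP k hkL).le,
      div_le_div_of_nonneg_right (hlam k hk hkL).2 (hP k hkL).le⟩)
    (fun k hk hkL => ?_) hL
  · simpa using hnormal
  have hPk := (hP k hkL.le).ne'
  have hdk := (hd (k + 1) (by omega) hkL).ne'
  have hrec := hBrec (k + 1) (by omega) hkL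
  simp only [Nat.add_sub_cancel] at hrec
  simp only [IsTailBoundStep, prod_Icc_succ_top (show 1 ≤ k + 1 by omega)]
  rcases ht (k + 1) (by omega) hkL with ht0 | ht1
  · obtain ⟨hm, hp⟩ := hrec.1 ht0
    have ha : 1 - t (k + 1) ≠ 0 := by linarith
    exact Or.inl ⟨ht0, div_eq_div_add_mul_div hPk hdk ha hm,
      div_eq_div_add_mul_div hPk hdk ha hp⟩
  · obtain ⟨hm, hp⟩ := hrec.2 ht1
    have ha : -t (k + 1) ≠ 0 := by linarith
    exact Or.inr ⟨ht1, div_eq_div_add_mul_div hPk hdk ha hp,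
      div_eq_div_add_mul_div hPk hdk ha hm⟩

theorem Sn_eq_newtonTail (n : ℕ) (d t lam : ℕ → ℝ) (s : ℝ) :
    Sn n d t lam s =
      s + s * (s - 1) * newtonTail (fun m => lam m / ∏ k ∈ Icc 1 m, d k) t (n - 1) s 1 := by
  rw [Sn, newtonTail, mul_sum]
  congr 1
  refine sum_congr rfl fun m _ => ?_
  ring

theorem add_mul_sub_one_mul_mem_Icc {s G ml mr : ℝ} (hs : s ∈ Set.Icc 0 1) (hml : ml ≤ 0)
    (hmr : 1 ≤ mr) (hG : G ∈ Set.Icc (-4 * (mr - 1) - 1) (-4 * ml + 1)) :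
    s + s * (s - 1) * G ∈ Set.Icc ml mr := by
  obtain ⟨hs0, hs1⟩ := hs
  obtain ⟨hGm, hGp⟩ := hG
  have hw : 0 ≤ s * (1 - s) := mul_nonneg hs0 (by linarith)
  -- The two nontrivial cases rest on `4 s (1 - s) ≤ 1`, i.e. on `(2 s - 1) ^ 2 ≥ 0`.
  constructor
  · rcases le_or_gt 0 G with hG | hG
    · nlinarith [mul_nonneg (neg_nonneg.mpr hml) (sq_nonneg (2 * s - 1)),
        mul_le_mul_of_nonneg_left hGp hw]
    · nlinarith [mul_nonneg hw (by linarith : (0:ℝ) ≤ -G)]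
  · rcases le_or_gt 0 G with hG | hG
    · nlinarith [mul_nonneg hw hG]
    · nlinarith [mul_nonneg (by linarith : (0:ℝ) ≤ mr - 1) (sq_nonneg (2 * s - 1)),
        mul_le_mul_of_nonneg_left hGm hw]

section Rescaling

variable {a b lo hi ml mr : ℝ}

theorem nonpos_and_one_le_of_ratio_bounds (hab : b ≠ a)
    (hm₁ : a < b → ml = min 0 ((lo - a) / (b - a)) ∧ mr = max 1 ((hi - a) / (b - a)))
    (hm₂ : b < a → ml = min 0 ((hi - a) / (b - a)) ∧ mr = max 1 ((lo - a) / (b - a))) :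
    ml ≤ 0 ∧ 1 ≤ mr := by
  rcases hab.lt_or_gt with h | h
  · obtain ⟨rfl, rfl⟩ := hm₂ h
    exact ⟨min_le_left _ _, le_max_left _ _⟩
  · obtain ⟨rfl, rfl⟩ := hm₁ h
    exact ⟨min_le_left _ _, le_max_left _ _⟩

theorem add_sub_mul_mem_Icc_of_ratio_bounds {S : ℝ} (hlo : lo ≤ min a b) (hhi : max a b ≤ hi)
    (hm₁ : a < b → ml = min 0 ((lo - a) / (b - a)) ∧ mr = max 1 ((hi - a) / (b - a)))
    (hm₂ : b < a → ml = min 0 ((hi - a) / (b - a)) ∧ mr = max 1 ((lo - a) / (b - a)))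
    (hS : S ∈ Set.Icc ml mr) : a + (b - a) * S ∈ Set.Icc lo hi := by
  obtain ⟨hlo_a, hlo_b⟩ := le_min_iff.1 hlo
  obtain ⟨hhi_a, hhi_b⟩ := max_le_iff.1 hhi
  obtain ⟨hmlS, hSmr⟩ := hS
  rcases lt_trichotomy a b with h | rfl | h
  · obtain ⟨rfl, rfl⟩ := hm₁ h
    have hba : 0 < b - a := sub_pos.2 h
    rw [min_eq_right (div_nonpos_of_nonpos_of_nonneg (by linarith) hba.le), div_le_iff₀ hba]
      at hmlS
    rw [max_eq_right ((one_le_div hba).2 (by linarith)), le_div_iff₀ hba] at hSmr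
    constructor <;> linarith
  · simpa using ⟨hlo_a, hhi_a⟩
  · obtain ⟨rfl, rfl⟩ := hm₂ h
    have hba : b - a < 0 := sub_neg.2 h
    rw [min_eq_right (div_nonpos_of_nonneg_of_nonpos (by linarith) hba.le),
      div_le_iff_of_neg hba] at hmlS
    rw [max_eq_right ((one_le_div_of_neg hba).2 (by linarith)), le_div_iff_of_neg hba] at hSmr
    constructor <;> linarith

end Rescaling

section Stencil

variable {e : ℕ → ℕ}

theorem stMin_le {j k : ℕ} (h : k ≤ j) : stMin e j ≤ e k :=
  inf'_le _ (mem_range.2 (by omega))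

theorem le_stMax {j k : ℕ} (h : k ≤ j) : e k ≤ stMax e j :=
  le_sup' _ (mem_range.2 (by omega))

theorem stMax_le {j m : ℕ} (h : ∀ k ≤ j, e k ≤ m) : stMax e j ≤ m :=
  sup'_le _ _ fun k hk => h k (by simpa [Nat.lt_succ_iff] using hk)

variable {N n i : ℕ} {x : ℕ → ℝ}

theorem dN_pos (hx : StrictMonoOn x (Set.Iic N)) (he0 : e 0 = i) (he1 : e 1 = i + 1)
    (heN : ∀ j, j ≤ n → e j ≤ N) {j : ℕ} (hj : j + 1 ≤ n) : 0 < dN x e i j := by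
  have hmin : stMin e (j + 1) ≤ i := he0 ▸ stMin_le (Nat.zero_le _)
  have hmax : i + 1 ≤ stMax e (j + 1) := he1 ▸ le_stMax (by omega)
  have hmaxN : stMax e (j + 1) ≤ N := stMax_le fun k hk => heN k (by omega)
  have hiN : i + 1 ≤ N := he1 ▸ heN 1 (by omega)
  refine div_pos (sub_pos.2 (hx ?_ ?_ (by omega))) (sub_pos.2 (hx ?_ ?_ (by omega))) <;>
    simp only [Set.mem_Iic] <;> omega

theorem tN_nonpos_or_one_le (hx : MonotoneOn x (Set.Iic N)) (hh : 0 < x (i + 1) - x i)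
    (he0 : e 0 = i) (he1 : e 1 = i + 1) (heN : ∀ j, j ≤ n → e j ≤ N) {j : ℕ} (hj : 2 ≤ j)
    (hjn : j ≤ n) (hstep : e j + 1 = stMin e (j - 1) ∨ e j = stMax e (j - 1) + 1) :
    tN x e i j ≤ 0 ∨ 1 ≤ tN x e i j := by
  have hiN : i + 1 ≤ N := he1 ▸ heN 1 (by omega)
  rcases hstep with hleft | hright
  · have hej : e j ≤ i := by have := stMin_le (e := e) (j := j - 1) (Nat.zero_le _); omega
    refine Or.inl (div_nonpos_of_nonpos_of_nonneg ?_ hh.le)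
    exact sub_nonpos.2 (hx (Set.mem_Iic.2 (by omega)) (Set.mem_Iic.2 (by omega)) hej)
  · have hej : i + 1 ≤ e j := by have := le_stMax (e := e) (j := j - 1) (k := 1) (by omega); omega
    refine Or.inr ((one_le_div hh).2 ?_)
    have := hx (Set.mem_Iic.2 (by omega)) (heN j hjn) hej
    linarith

end Stencil

section NewtonForm

variable {x u : ℕ → ℝ} {e : ℕ → ℕ} {i : ℕ}

theorem divdiff_one : divdiff x u i 1 = (u (i + 1) - u i) / (x (i + 1) - x i) := by
  simp [divdiff]

theorem UV_zero (he0 : e 0 = i) (he1 : e 1 = i + 1) : UV x u e 0 = divdiff x u i 1 := by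
  have hmin : stMin e 1 = i := le_antisymm (he0 ▸ stMin_le (Nat.zero_le 1))
    (le_inf' _ _ fun k hk => by have := mem_range.1 hk; interval_cases k <;> omega)
  have hmax : stMax e 1 = i + 1 := le_antisymm
    (sup'_le _ _ fun k hk => by have := mem_range.1 hk; interval_cases k <;> omega)
    (he1 ▸ le_stMax le_rfl)
  rw [UV, hmin, hmax, Nat.add_sub_cancel_left]

theorem UV_mul_pow_eq (hu : u (i + 1) ≠ u i) {j : ℕ}
    (hd : ∀ k ∈ Icc 1 j, dN x e i k ≠ 0) :
    UV x u e j * (x (i + 1) - x i) ^ (j + 1) =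
      (u (i + 1) - u i) * (lamBar x u e i j / ∏ k ∈ Icc 1 j, dN x e i k) := by
  have hW : ∏ k ∈ Icc 1 j, (x (stMax e (k + 1)) - x (stMin e (k + 1))) ≠ 0 :=
    prod_ne_zero_iff.2 fun k hk => (div_ne_zero_iff.1 (hd k hk)).1
  have hΔ : u (i + 1) - u i ≠ 0 := sub_ne_zero.2 hu
  simp only [lamBar, divdiff_one, dN]
  rw [prod_div_distrib, prod_const, Nat.card_Icc, Nat.add_sub_cancel]
  field_simp
  ring

theorem Un_eq_Sn {n : ℕ} (hn : 1 ≤ n) (he0 : e 0 = i) (he1 : e 1 = i + 1)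
    (hh : x (i + 1) - x i ≠ 0) (hu : u (i + 1) ≠ u i)
    (hd : ∀ k ∈ Icc 1 (n - 1), dN x e i k ≠ 0) (y : ℝ) :
    Un x u e i n y = u i + (u (i + 1) - u i) *
      Sn n (dN x e i) (tN x e i) (lamBar x u e i) ((y - x i) / (x (i + 1) - x i)) := by
  set s := (y - x i) / (x (i + 1) - x i)
  have hyx : ∀ k, y - x (e k) = (x (i + 1) - x i) * (s - tN x e i k) := by
    intro k
    simp only [tN, s]
    field_simp
    ring
  have hprod : ∀ j, 1 ≤ j → ∏ k ∈ range (j + 1), (y - x (e k)) =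
      (x (i + 1) - x i) ^ (j + 1) * (s * (s - 1) * ∏ k ∈ Icc 2 j, (s - tN x e i k)) := by
    intro j hj
    have hrange : range (j + 1) = insert 0 (insert 1 (Icc 2 j)) := by
      ext k; simp only [mem_range, mem_insert, mem_Icc]; omega
    simp only [hyx, prod_mul_distrib, prod_const, card_range]
    rw [hrange, prod_insert (by simp), prod_insert (by simp), tN, tN, he0, he1, sub_self,
      zero_div, sub_zero, div_self hh]
    ring
  have hrange : range n = insert 0 (Icc 1 (n - 1)) := by
    ext k; simp only [mem_range, mem_insert, mem_Icc]; omega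
  rw [Un, Sn, hrange, sum_insert (by simp), mul_add, mul_sum]
  congr 2
  · rw [UV_zero he0 he1, divdiff_one, zero_add, range_one, prod_singleton, he0]
    simp only [s]
    field_simp
  · refine sum_congr rfl fun j hj => ?_
    rw [hprod j (mem_Icc.1 hj).1, ← mul_assoc, UV_mul_pow_eq hu fun k hk => hd k ?_]
    · ring
    · simp only [mem_Icc] at hj hk ⊢; omega

end NewtonForm

theorem ppi_interpolant_bounds_general
    (N n i : ℕ) (hn : 2 ≤ n)
    (x u : ℕ → ℝ)
    (hx : ∀ k, k < N → x k < x (k + 1))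
    (e : ℕ → ℕ)
    (he0 : e 0 = i) (he1 : e 1 = i + 1)
    (heN : ∀ j, j ≤ n → e j ≤ N)
    (heStep : ∀ j, 2 ≤ j → j ≤ n →
      e j + 1 = stMin e (j - 1) ∨ e j = stMax e (j - 1) + 1)
    (hu : u (i + 1) ≠ u i)
    (umin umax ml mr : ℝ)
    (humin : umin ≤ min (u i) (u (i + 1)))
    (humax : max (u i) (u (i + 1)) ≤ umax)
    (hm₁ : u i < u (i + 1) →
      ml = min 0 ((umin - u i) / (u (i + 1) - u i)) ∧
      mr = max 1 ((umax - u i) / (u (i + 1) - u i)))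
    (hm₂ : u (i + 1) < u i →
      ml = min 0 ((umax - u i) / (u (i + 1) - u i)) ∧
      mr = max 1 ((umin - u i) / (u (i + 1) - u i)))
    (Bm Bp : ℕ → ℝ)
    (hBm1 : Bm 1 = (-4 * (mr - 1) - 1) * dN x e i 1)
    (hBp1 : Bp 1 = (-4 * ml + 1) * dN x e i 1)
    (hBrec : ∀ j, 2 ≤ j → j ≤ n - 1 →
      (tN x e i j ≤ 0 →
        Bm j = (Bm (j - 1) - lamBar x u e i (j - 1)) * dN x e i j / (1 - tN x e i j) ∧
        Bp j = (Bp (j - 1) - lamBar x u e i (j - 1)) * dN x e i j / (1 - tN x e i j)) ∧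
      (1 ≤ tN x e i j →
        Bm j = (Bp (j - 1) - lamBar x u e i (j - 1)) * dN x e i j / (-tN x e i j) ∧
        Bp j = (Bm (j - 1) - lamBar x u e i (j - 1)) * dN x e i j / (-tN x e i j)))
    (hlam : ∀ j, 1 ≤ j → j ≤ n - 1 →
      Bm j ≤ lamBar x u e i j ∧ lamBar x u e i j ≤ Bp j)
    :
    ∀ y ∈ Set.Icc (x i) (x (i + 1)),
      umin ≤ Un x u e i n y ∧ Un x u e i n y ≤ umax := by
  intro y hy
  have hxmono : StrictMonoOn x (Set.Iic N) := strictMonoOn_Iic_of_lt_succ hx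
  have hd : ∀ k, k + 1 ≤ n → 0 < dN x e i k := fun k hk => dN_pos hxmono he0 he1 heN hk
  have hh : 0 < x (i + 1) - x i := sub_pos.2 (hx i (by have := heN 1 (by omega); omega))
  set s := (y - x i) / (x (i + 1) - x i)
  have hs : s ∈ Set.Icc 0 1 :=
    ⟨div_nonneg (by linarith [hy.1]) hh.le, (div_le_one hh).2 (by linarith [hy.2])⟩
  obtain ⟨hml, hmr⟩ := nonpos_and_one_le_of_ratio_bounds hu hm₁ hm₂
  have hG := newtonTail_mem_Icc_of_ppi hs (by omega) (fun k _ hk => hd k (by omega))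
    (fun j hj hjn => tN_nonpos_or_one_le hxmono.monotoneOn hh he0 he1 heN hj (by omega)
      (heStep j hj (by omega))) hBrec hlam
  rw [hBm1, hBp1, mul_div_cancel_right₀ _ (hd 1 (by omega)).ne',
    mul_div_cancel_right₀ _ (hd 1 (by omega)).ne'] at hG
  rw [Un_eq_Sn (by omega) he0 he1 hh.ne' hu fun k hk => (hd k (by have := (mem_Icc.1 hk).2; omega)).ne',
    Sn_eq_newtonTail]
  exact add_sub_mul_mem_Icc_of_ratio_bounds humin humax hm₁ hm₂
    (add_mul_sub_one_mul_mem_Icc hs hml hmr hG)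

/-- Positivity-preserving interpolation theorem on the adaptive stencil: if the scaled
divided-difference ratios satisfy the recursive bounds with PPI initialization built from
`mℓ, mr`, then `u_min ≤ U_n(x) ≤ u_max` on the base interval. -/
theorem ppi_interpolant_bounds
    (N n i : ℕ) (hn : 2 ≤ n) (hiN : i + 1 ≤ N)
    (x u : ℕ → ℝ)
    (hx : ∀ k, k < N → x k < x (k + 1))
    (e : ℕ → ℕ)
    (he0 : e 0 = i) (he1 : e 1 = i + 1)
    (heN : ∀ j, j ≤ n → e j ≤ N)
    (heStep : ∀ j, 2 ≤ j → j ≤ n →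
      e j + 1 = stMin e (j - 1) ∨ e j = stMax e (j - 1) + 1)
    (hu : u (i + 1) ≠ u i)
    (umin umax ml mr : ℝ)
    (humin : umin ≤ min (u i) (u (i + 1)))
    (humax : max (u i) (u (i + 1)) ≤ umax)
    (hm₁ : u i < u (i + 1) →
      ml = min 0 ((umin - u i) / (u (i + 1) - u i)) ∧
      mr = max 1 ((umax - u i) / (u (i + 1) - u i)))
    (hm₂ : u (i + 1) < u i →
      ml = min 0 ((umax - u i) / (u (i + 1) - u i)) ∧
      mr = max 1 ((umin - u i) / (u (i + 1) - u i)))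
    (Bm Bp : ℕ → ℝ)
    (hBm1 : Bm 1 = (-4 * (mr - 1) - 1) * dN x e i 1)
    (hBp1 : Bp 1 = (-4 * ml + 1) * dN x e i 1)
    (hBrec : ∀ j, 2 ≤ j → j ≤ n - 1 →
      (tN x e i j ≤ 0 →
        Bm j = (Bm (j - 1) - lamBar x u e i (j - 1)) * dN x e i j / (1 - tN x e i j) ∧
        Bp j = (Bp (j - 1) - lamBar x u e i (j - 1)) * dN x e i j / (1 - tN x e i j)) ∧
      (1 ≤ tN x e i j →
        Bm j = (Bp (j - 1) - lamBar x u e i (j - 1)) * dN x e i j / (-tN x e i j) ∧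
        Bp j = (Bm (j - 1) - lamBar x u e i (j - 1)) * dN x e i j / (-tN x e i j)))
    (hlam : ∀ j, 1 ≤ j → j ≤ n - 1 →
      Bm j ≤ lamBar x u e i j ∧ lamBar x u e i j ≤ Bp j)
    :
    ∀ y ∈ Set.Icc (x i) (x (i + 1)),
      umin ≤ Un x u e i n y ∧ Un x u e i n y ≤ umax :=
  ppi_interpolant_bounds_general N n i hn x u hx e he0 he1 heN heStep hu umin umax ml mr humin humax
    hm₁ hm₂ Bm Bp hBm1 hBp1 hBrec hlam
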